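/- For fixed q > 1, α ∈ [0,1], and k ≥ 2, the eigenvalues satisfy lim_{n→∞} λ_{k,q}^{(α,n)} = 1. -/

import Mathlib

open Finset Filter Topology

/-- The q-integer `[m]_q = 1 + q + ... + q^{m-1}`, with `[0]_q = 0`. -/
noncomputable def qInt (q : ℝ) (m : ℕ) : ℝ := ∑ i ∈ Finset.range m, q ^ i

/-- The q-factorial `[n]_q! = [1]_q [2]_q ⋯ [n]_q`. -/
noncomputable def qFact (q : ℝ) (n : ℕ) : ℝ := ∏ i ∈ Finset.range n, qInt q (i + 1)

/-- The q-binomial coefficient `[n]_q!/([k]_q! [n-k]_q!)` (zero if `k > n`). -/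
noncomputable def qBinom (q : ℝ) (n k : ℕ) : ℝ :=
  if k ≤ n then qFact q n / (qFact q k * qFact q (n - k)) else 0

/-- The q-Stirling number of the second kind. -/
noncomputable def qStirling (q : ℝ) (k r : ℕ) : ℝ :=
  (1 / (qFact q r * q ^ (r * (r - 1) / 2))) *
    ∑ i ∈ Finset.range (r + 1),
      (-1 : ℝ) ^ i * q ^ (i * (i - 1) / 2) * qBinom q r i * (qInt q (r - i)) ^ k

/-- The q-forward difference operator on sequences:
`Δ_q^0 f_i = f_i`, `Δ_q^{r+1} f_i = Δ_q^r f_{i+1} - q^r Δ_q^r f_i`. -/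
noncomputable def qDiff (q : ℝ) : ℕ → (ℕ → ℝ) → ℕ → ℝ
  | 0, f, i => f i
  | r + 1, f, i => qDiff q r f (i + 1) - q ^ r * qDiff q r f i

/-- The eigenvalues `λ_{k,q}^{(α,n)}` of the (α,q)-Bernstein operator. -/
noncomputable def lamEig (q α : ℝ) (n k : ℕ) : ℝ :=
  q ^ (k * (k - 1) / 2) * qFact q (n - 2) / (qFact q (n - k) * (qInt q n) ^ k) *
    ((1 - α) * qInt q (n - k) * qInt q (n - 1 + k) + α * qInt q n * qInt q (n - 1))

/-- The coefficients `a_{n,q}(r,k)` of `T_{n,q,α}(t^k; x) = Σ_r a_{n,q}(r,k) x^r`. -/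
noncomputable def aCoef (q α : ℝ) (n r k : ℕ) : ℝ :=
  q ^ (r * (r - 1) / 2) * qFact q (n - 2) / ((qInt q n) ^ k * qFact q (n - r)) *
    ((1 - α) * qInt q (n - r) *
        (qInt q (n + r - 1) * qStirling q (k + 1) (r + 1) -
          qInt q (r + 1) * qInt q (n - 1) * qStirling q k (r + 1)) +
      α * qInt q n * qInt q (n - 1) * qStirling q k r)

/-- The (α,q)-Bernstein operator, via its forward-difference representation
`T_{n,q,α}(f;x) = Σ_{r=0}^n ((1-α) C_q(n-1,r) Δ_q^r g_0 + α C_q(n,r) Δ_q^r f_0) x^r`,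
where `f_i = f([i]_q/[n]_q)` and
`g_i = (1 - q^{n-i-1}[i]_q/[n-1]_q) f_i + (q^{n-i-1}[i]_q/[n-1]_q) f_{i+1}`. -/
noncomputable def Talpha (q α : ℝ) (n : ℕ) (f : ℝ → ℝ) (x : ℝ) : ℝ :=
  let fs : ℕ → ℝ := fun i => f (qInt q i / qInt q n)
  let gs : ℕ → ℝ := fun i =>
    (1 - q ^ (n - i - 1) * qInt q i / qInt q (n - 1)) * fs i +
      (q ^ (n - i - 1) * qInt q i / qInt q (n - 1)) * fs (i + 1)
  ∑ r ∈ Finset.range (n + 1),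
    ((1 - α) * qBinom q (n - 1) r * qDiff q r gs 0 + α * qBinom q n r * qDiff q r fs 0) * x ^ r

/-! For `q ≥ 1` we have `[a + n]_q = [a]_q + q^a [n]_q` and `[n]_q → ∞`, hence
`[n - a]_q / [n]_q → q^{-a}`. Since `[n-2]_q! / [n-k]_q! = ∏_{j < k-2} [n-2-j]_q`, the eigenvalue
`λ_{k,q}^{(α,n)}` is `q^{k(k-1)/2}` times a product of such ratios, and its limit is
`q^{k(k-1)/2 - (2 + ⋯ + (k-1)) - 1} = 1`. -/

lemma qInt_add (q : ℝ) (a n : ℕ) : qInt q (a + n) = qInt q a + q ^ a * qInt q n := by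
  simp only [qInt, Finset.sum_range_add, pow_add, Finset.mul_sum]

lemma qFact_eq_qFact_sub_mul_prod (q : ℝ) {m n : ℕ} (h : m ≤ n) :
    qFact q n = qFact q (n - m) * ∏ j ∈ Finset.range m, qInt q (n - j) := by
  obtain ⟨a, rfl⟩ := Nat.exists_eq_add_of_le' h
  rw [Nat.add_sub_cancel, ← Finset.prod_range_reflect (fun j => qInt q (a + m - j)), qFact,
    Finset.prod_range_add]
  refine congrArg (qFact q a * ·) (Finset.prod_congr rfl fun j hj => ?_)
  rw [Finset.mem_range] at hj
  congr 1
  omega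

lemma choose_two_eq_sum_range_add_two {k : ℕ} (hk : 2 ≤ k) :
    k * (k - 1) / 2 = ∑ j ∈ Finset.range (k - 2), (2 + j) + 1 := by
  obtain ⟨m, rfl⟩ := Nat.exists_eq_add_of_le' hk
  rw [← Finset.sum_range_id, Finset.sum_range_succ', Finset.sum_range_succ']
  simp [add_comm _ 2]

section QInt

variable {q : ℝ}

lemma qInt_pos (hq : 0 ≤ q) {m : ℕ} (hm : 0 < m) : 0 < qInt q m :=
  Finset.sum_pos' (fun i _ => pow_nonneg hq i) ⟨0, Finset.mem_range.2 hm, by simp⟩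

lemma qFact_pos (hq : 0 ≤ q) (m : ℕ) : 0 < qFact q m :=
  Finset.prod_pos fun i _ => qInt_pos hq i.succ_pos

lemma natCast_le_qInt (hq : 1 ≤ q) (n : ℕ) : (n : ℝ) ≤ qInt q n := by
  simpa [qInt] using Finset.card_nsmul_le_sum (Finset.range n) (q ^ ·) 1 fun i _ => one_le_pow₀ hq

lemma tendsto_qInt_atTop (hq : 1 ≤ q) : Tendsto (qInt q) atTop atTop :=
  tendsto_atTop_mono (natCast_le_qInt hq) tendsto_natCast_atTop_atTop

lemma tendsto_qInt_add_div_qInt (hq : 1 ≤ q) (a : ℕ) :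
    Tendsto (fun n => qInt q (a + n) / qInt q n) atTop (𝓝 (q ^ a)) := by
  have hlim : Tendsto (fun n => qInt q a / qInt q n + q ^ a) atTop (𝓝 (0 + q ^ a)) :=
    (tendsto_const_nhds.div_atTop (tendsto_qInt_atTop hq)).add_const _
  rw [zero_add] at hlim
  refine hlim.congr' ?_
  filter_upwards [eventually_gt_atTop 0] with n hn
  rw [qInt_add, add_div, mul_div_cancel_right₀ _ (qInt_pos (zero_le_one.trans hq) hn).ne']

lemma tendsto_qInt_sub_div_qInt (hq : 1 ≤ q) (a : ℕ) :
    Tendsto (fun n => qInt q (n - a) / qInt q n) atTop (𝓝 (q ^ a)⁻¹) := by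
  have hinv := ((tendsto_qInt_add_div_qInt hq a).comp (tendsto_sub_atTop_nat a)).inv₀
    (pow_pos (zero_lt_one.trans_le hq) a).ne'
  refine hinv.congr' ?_
  filter_upwards [eventually_ge_atTop a] with n hn
  simp only [Function.comp_apply, Nat.add_sub_cancel' hn, inv_div]

end QInt

lemma lamEig_eq_prod (α : ℝ) {q : ℝ} (hq : 0 ≤ q) {n k : ℕ} (hk : 2 ≤ k) (hkn : k ≤ n) :
    lamEig q α n k = q ^ (k * (k - 1) / 2) *
      (∏ j ∈ Finset.range (k - 2), qInt q (n - (2 + j)) / qInt q n) *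
      ((1 - α) * (qInt q (n - k) / qInt q n) * (qInt q (k - 1 + n) / qInt q n) +
        α * (qInt q (n - 1) / qInt q n)) := by
  obtain ⟨m, rfl⟩ := Nat.exists_eq_add_of_le' hk
  have hn : qInt q n ≠ 0 := (qInt_pos hq (by omega)).ne'
  have hfact : qFact q (n - (m + 2)) ≠ 0 := (qFact_pos hq _).ne'
  rw [lamEig, qFact_eq_qFact_sub_mul_prod q (show m ≤ n - 2 by omega)]
  simp_rw [Nat.sub_sub]
  rw [add_comm 2 m, show n - 1 + (m + 2) = m + 2 - 1 + n by omega,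
    Finset.prod_div_distrib, Finset.prod_const, Finset.card_range, Nat.add_sub_cancel]
  field_simp
  ring

theorem lamEig_limit_q_gt_one_general (q α : ℝ) (hq : 1 < q)
    (k : ℕ) (hk : 2 ≤ k) :
    Filter.Tendsto (fun n : ℕ => lamEig q α n k) Filter.atTop (nhds 1) := by
  have hratio := tendsto_qInt_sub_div_qInt hq.le
  have hlim := ((tendsto_const_nhds (x := q ^ (k * (k - 1) / 2))).mul
    (tendsto_finsetProd (Finset.range (k - 2)) fun j _ => hratio (2 + j))).mul
    ((((tendsto_const_nhds (x := 1 - α)).mul (hratio k)).mul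
      (tendsto_qInt_add_div_qInt hq.le (k - 1))).add ((tendsto_const_nhds (x := α)).mul (hratio 1)))
  have hvalue : (q ^ (k * (k - 1) / 2) * ∏ j ∈ Finset.range (k - 2), (q ^ (2 + j))⁻¹) *
      ((1 - α) * (q ^ k)⁻¹ * q ^ (k - 1) + α * (q ^ 1)⁻¹) = 1 := by
    have hq0 : q ≠ 0 := by positivity
    rw [Finset.prod_inv_distrib, Finset.prod_pow_eq_pow_sum, choose_two_eq_sum_range_add_two hk]
    obtain ⟨m, rfl⟩ := Nat.exists_eq_add_of_le' hk
    rw [show m + 2 - 1 = m + 1 by omega]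
    field_simp
    ring
  rw [hvalue] at hlim
  refine hlim.congr' ?_
  filter_upwards [eventually_ge_atTop k] with n hn
  exact (lamEig_eq_prod α (by positivity) hk hn).symm

theorem lamEig_limit_q_gt_one (q α : ℝ) (hq : 1 < q) (hα : α ∈ Set.Icc (0 : ℝ) 1)
    (k : ℕ) (hk : 2 ≤ k) :
    Filter.Tendsto (fun n : ℕ => lamEig q α n k) Filter.atTop (nhds 1) :=
  lamEig_limit_q_gt_one_general q α hq k hk
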